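/- Let M be a compact Hausdorff space, ε > 0, and a : M → [−1,1] an ε-fragmented function: for every nonempty closed F ⊆ M there is a nonempty relatively open U ⊆ F with diam a(U) ≤ ε. Then there exists a fragmented function b : M → [−1,1] with ‖a − b‖_∞ ≤ ε. -/
import Mathlib

universe u

noncomputable def USeq {M : Type u} (f : Set M → Set M) (α : Ordinal.{u}) : Set M :=
  f (⋃ β : Set.Iio α, USeq f β.1)
termination_by α
decreasing_by exact β.2

noncomputable def WSeq {M : Type u} (f : Set M → Set M) (α : Ordinal.{u}) : Set M :=
  ⋃ β : Set.Iio α, USeq f β.1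

lemma USeq_eq {M : Type u} (f : Set M → Set M) (α : Ordinal.{u}) :
    USeq f α = f (WSeq f α) := by rw [USeq]; rfl

lemma USeq_subset_WSeq {M : Type u} (f : Set M → Set M) {β α : Ordinal.{u}} (h : β < α) :
    USeq f β ⊆ WSeq f α :=
  Set.subset_iUnion (fun γ : Set.Iio α => USeq f γ.1) ⟨β, h⟩

lemma isOpen_WSeq {M : Type u} [TopologicalSpace M] (f : Set M → Set M)
    (hf : ∀ S, IsOpen S → IsOpen (f S)) (α : Ordinal.{u}) : IsOpen (WSeq f α) := by
  induction α using Ordinal.induction with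
  | h α ih =>
    exact isOpen_iUnion fun β => by rw [USeq_eq]; exact hf _ (ih β.1 β.2)

lemma isOpen_USeq {M : Type u} [TopologicalSpace M] (f : Set M → Set M)
    (hf : ∀ S, IsOpen S → IsOpen (f S)) (α : Ordinal.{u}) : IsOpen (USeq f α) := by
  rw [USeq_eq]; exact hf _ (isOpen_WSeq f hf α)

lemma exists_USeq_univ {M : Type u} [TopologicalSpace M] (f : Set M → Set M)
    (hf1 : ∀ S, S ⊆ f S) (hfo : ∀ S, IsOpen S → IsOpen (f S))
    (hf2 : ∀ S, IsOpen S → S ≠ Set.univ → f S ≠ S) :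
    ∃ α, USeq f α = Set.univ := by
  by_contra h
  push_neg at h
  have hsm : StrictMono (USeq f) := by
    intro β α hβα
    have h1 : USeq f β ⊆ WSeq f α := USeq_subset_WSeq f hβα
    have h2 : WSeq f α ⊆ USeq f α := by rw [USeq_eq]; exact hf1 _
    have h3 : WSeq f α ≠ USeq f α := by
      intro he
      have hWne : WSeq f α ≠ Set.univ := fun hu => h α (Set.univ_subset_iff.1 (hu ▸ h2))
      exact hf2 _ (isOpen_WSeq f hfo α) hWne ((USeq_eq f α).symm.trans he.symm)
    exact lt_of_le_of_lt (le_of_eq rfl) (lt_of_le_of_lt (Set.le_iff_subset.2 h1)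
      (lt_of_le_of_ne (Set.le_iff_subset.2 h2) h3))
  exact not_small_ordinal.{u} (small_of_injective hsm.injective)


/-- A real function `g` on a topological space `M` is fragmented if for every `ε > 0` and
every nonempty closed `F ⊆ M` there is a nonempty relatively open subset `U = F ∩ V` of `F`
with `diam g(U) < ε`. -/
def Fragmented {M : Type*} [TopologicalSpace M] (g : M → ℝ) : Prop :=
  ∀ ε > (0 : ℝ), ∀ F : Set M, IsClosed F → F.Nonempty →
    ∃ V : Set M, IsOpen V ∧ (F ∩ V).Nonempty ∧ Metric.diam (g '' (F ∩ V)) < ε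

/-- Let `M` be compact Hausdorff, `ε > 0`, and `a : M → [−1,1]` an `ε`-fragmented function
(every nonempty closed `F` has a nonempty relatively open subset on which the oscillation of
`a` is at most `ε`). Then there is a fragmented `b : M → [−1,1]` with `‖a − b‖_∞ ≤ ε`. -/
theorem stmt16 {M : Type*} [TopologicalSpace M] [CompactSpace M] [T2Space M]
    (ε : ℝ) (hε : 0 < ε) (a : M → ℝ) (ha : ∀ x, a x ∈ Set.Icc (-1 : ℝ) 1)
    (hfrag : ∀ F : Set M, IsClosed F → F.Nonempty →
      ∃ V : Set M, IsOpen V ∧ (F ∩ V).Nonempty ∧ Metric.diam (a '' (F ∩ V)) ≤ ε) :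
    ∃ b : M → ℝ, (∀ x, b x ∈ Set.Icc (-1 : ℝ) 1) ∧ Fragmented b ∧
      ∀ x, |a x - b x| ≤ ε := by
  classical
  rcases isEmpty_or_nonempty M with hM | hM
  · refine ⟨a, ha, ?_, fun x => isEmptyElim x⟩
    intro ε' hε' F hF hFne
    obtain ⟨x, -⟩ := hFne
    exact isEmptyElim x
  have hch : ∀ S : Set M, ∃ V : Set M, ∃ p : M,
      (IsOpen S → Sᶜ.Nonempty → IsOpen V ∧ p ∈ Sᶜ ∩ V ∧ Metric.diam (a '' (Sᶜ ∩ V)) ≤ ε) ∧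
      (¬(IsOpen S ∧ Sᶜ.Nonempty) → V = ∅) := by
    intro S
    by_cases h : IsOpen S ∧ Sᶜ.Nonempty
    · obtain ⟨V, hV, hne, hd⟩ := hfrag Sᶜ h.1.isClosed_compl h.2
      obtain ⟨p, hp⟩ := hne
      exact ⟨V, p, fun _ _ => ⟨hV, hp, hd⟩, fun h' => absurd h h'⟩
    · exact ⟨∅, Classical.arbitrary M, fun h1 h2 => absurd ⟨h1, h2⟩ h, fun _ => rfl⟩
  choose Vc pt hVc hVe using hch
  set f : Set M → Set M := fun S => S ∪ Vc S with hfdef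
  have hfo : ∀ S, IsOpen S → IsOpen (f S) := by
    intro S hS
    by_cases hne : Sᶜ.Nonempty
    · exact hS.union (hVc S hS hne).1
    · show IsOpen (S ∪ Vc S)
      rw [hVe S (fun h => hne h.2), Set.union_empty]; exact hS
  have hf1 : ∀ S, S ⊆ f S := fun S => Set.subset_union_left
  have hf2 : ∀ S, IsOpen S → S ≠ Set.univ → f S ≠ S := by
    intro S hS hSne he
    have hne : Sᶜ.Nonempty := Set.nonempty_compl.2 hSne
    obtain ⟨-, hp, -⟩ := hVc S hS hne
    have hmem : pt S ∈ f S := Set.mem_union_right S hp.2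
    rw [he] at hmem
    exact hp.1 hmem
  obtain ⟨α₀, hα₀⟩ := exists_USeq_univ f hf1 hfo hf2
  set rk : M → _ := fun x => sInf {α | x ∈ USeq f α} with hrkdef
  have hrk_mem : ∀ x, x ∈ USeq f (rk x) := fun x =>
    csInf_mem (s := {α | x ∈ USeq f α}) ⟨α₀, by simp [hα₀]⟩
  have hnotW : ∀ x, x ∉ WSeq f (rk x) := by
    intro x hx
    obtain ⟨⟨β, hβlt⟩, hmem⟩ := Set.mem_iUnion.1 hx
    exact absurd (csInf_le' (s := {α | x ∈ USeq f α}) hmem) (not_le.2 hβlt)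
  -- main piece facts
  have hbd : ∀ t : Set M, Bornology.IsBounded (a '' t) := by
    intro t
    refine (Metric.isBounded_Icc (-1 : ℝ) 1).subset ?_
    rintro y ⟨z, -, rfl⟩; exact ha z
  have hpiece : ∀ x : M, x ∈ (WSeq f (rk x))ᶜ ∩ Vc (WSeq f (rk x)) ∧
      pt (WSeq f (rk x)) ∈ (WSeq f (rk x))ᶜ ∩ Vc (WSeq f (rk x)) ∧
      Metric.diam (a '' ((WSeq f (rk x))ᶜ ∩ Vc (WSeq f (rk x)))) ≤ ε := by
    intro x
    have hWo : IsOpen (WSeq f (rk x)) := isOpen_WSeq f hfo _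
    have hWne : (WSeq f (rk x))ᶜ.Nonempty := ⟨x, hnotW x⟩
    obtain ⟨hVo, hptW, hdW⟩ := hVc _ hWo hWne
    have hxU : x ∈ WSeq f (rk x) ∪ Vc (WSeq f (rk x)) := by
      have := hrk_mem x
      rwa [USeq_eq] at this
    exact ⟨⟨hnotW x, hxU.resolve_left (hnotW x)⟩, hptW, hdW⟩
  refine ⟨fun x => a (pt (WSeq f (rk x))), fun x => ha _, ?_, ?_⟩
  · -- Fragmented
    intro ε' hε' F hF hFne
    have hs : {α | (F ∩ USeq f α).Nonempty}.Nonempty := by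
      refine ⟨α₀, ?_⟩
      rw [Set.mem_setOf_eq, hα₀, Set.inter_univ]; exact hFne
    have hαs : (F ∩ USeq f (sInf {α | (F ∩ USeq f α).Nonempty})).Nonempty := csInf_mem hs
    refine ⟨USeq f (sInf {α | (F ∩ USeq f α).Nonempty}), isOpen_USeq f hfo _, hαs, ?_⟩
    have hconst : ∀ x ∈ F ∩ USeq f (sInf {α | (F ∩ USeq f α).Nonempty}),
        rk x = sInf {α | (F ∩ USeq f α).Nonempty} := by
      rintro x ⟨hxF, hxU⟩
      exact le_antisymm (csInf_le' (s := {α | x ∈ USeq f α}) hxU)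
        (csInf_le' ⟨x, hxF, hrk_mem x⟩)
    have hss : ((fun x => a (pt (WSeq f (rk x)))) ''
        (F ∩ USeq f (sInf {α | (F ∩ USeq f α).Nonempty}))).Subsingleton := by
      rintro - ⟨x, hx, rfl⟩ - ⟨y, hy, rfl⟩
      simp only []
      rw [hconst x hx, hconst y hy]
    rw [Metric.diam_subsingleton hss]
    exact hε'
  · -- distance bound
    intro x
    obtain ⟨hx, hp, hd⟩ := hpiece x
    rw [← Real.dist_eq]
    exact (Metric.dist_le_diam_of_mem (hbd _) ⟨x, hx, rfl⟩ ⟨_, hp, rfl⟩).trans hd
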